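/- Let S be a countable set and let S_1 ⊆ S_2 ⊆ ⋯ be finite subsets with ⋃_n S_n = S. For each n ∈ ℕ and i ∈ {1,2}, let ν_{i,n} be a monotone probability measure on {0,1}^{S_n} assigning positive probability to every configuration, and let μ_{i,n} be the probability measure on {0,1}^S obtained as the pushforward of ν_{i,n} under the map extending a configuration on S_n by the value 0 on S∖S_n. Assume μ_{1,n} → μ_1 and μ_{2,n} → μ_2 weakly. Set A_n := inf over s ∈ S_n and ξ ∈ {0,1}^{S_n∖{s}} of [ν_{2,n}(σ(s)=1 | σ ≡ ξ on S_n∖{s}) − ν_{1,n}(σ(s)=1 | σ ≡ ξ on S_n∖{s})]. If inf_n A_n > 0, then there exists ε > 0 such that μ_1 ≼ μ_2^{(-,ε)} and μ_1^{(+,ε)} ≼ μ_2. -/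

import Mathlib

/-!
Configurations on a countable set `S` are `η : S → Bool` (`true` = 1, `false` = 0), with
the product topology and product σ-algebra. The measures `μ^{(-,ε)}` and `μ^{(+,ε)}` are
characterized by their values on the generating π-systems of cylinder events
`{η ≡ 1 on F}` (resp. `{η ≡ 0 on F}`), `F` finite: if `X ∼ μ` and, independently,
`Z = (Z s)` is i.i.d. with `P(Z s = 1) = 1 - ε`, then the law `ν` of `s ↦ min (X s) (Z s)`
satisfies `ν{η ≡ 1 on F} = (1-ε)^{|F|} μ{η ≡ 1 on F}`, and this determines `ν` uniquely
among Borel probability measures; dually for `max` with `P(Z s = 1) = ε`.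
-/

open MeasureTheory Filter Topology

variable {S : Type*} [Countable S]

/-- Stochastic domination `μ ≼ ν`: `∫ f dμ ≤ ∫ f dν` for every bounded continuous `f`
that is nondecreasing with respect to the coordinatewise partial order. -/
def StochDom (μ ν : Measure (S → Bool)) : Prop :=
  ∀ f : (S → Bool) → ℝ, Continuous f → (∃ C, ∀ x, |f x| ≤ C) → Monotone f →
    ∫ x, f x ∂μ ≤ ∫ x, f x ∂ν

/-- Weak convergence `μₙ → μ`: convergence of the integrals of all bounded continuous
functions. -/
def WeakConv (μn : ℕ → Measure (S → Bool)) (μ : Measure (S → Bool)) : Prop :=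
  ∀ f : (S → Bool) → ℝ, Continuous f → (∃ C, ∀ x, |f x| ≤ C) →
    Tendsto (fun n => ∫ x, f x ∂(μn n)) atTop (𝓝 (∫ x, f x ∂μ))

/-- `ν = μ^{(-,ε)}`: `ν` is the law of `s ↦ min (X s) (Z s)`, `X ∼ μ`, `Z` an independent
i.i.d. field with `P(Z s = 1) = 1 - ε`, characterized on the cylinders `{η ≡ 1 on F}`. -/
def IsMinusEps (μ ν : Measure (S → Bool)) (ε : ℝ) : Prop :=
  ∀ F : Finset S,
    ν {η | ∀ s ∈ F, η s = true} =
      ENNReal.ofReal ((1 - ε) ^ F.card) * μ {η | ∀ s ∈ F, η s = true}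

/-- `ν = μ^{(+,ε)}`: `ν` is the law of `s ↦ max (X s) (Z s)`, `X ∼ μ`, `Z` an independent
i.i.d. field with `P(Z s = 1) = ε`, characterized on the cylinders `{η ≡ 0 on F}`. -/
def IsPlusEps (μ ν : Measure (S → Bool)) (ε : ℝ) : Prop :=
  ∀ F : Finset S,
    ν {η | ∀ s ∈ F, η s = false} =
      ENNReal.ofReal ((1 - ε) ^ F.card) * μ {η | ∀ s ∈ F, η s = false}

variable [DecidableEq S]

/-- The conditional probability `ν(σ(s) = 1 | σ ≡ ξ off s)` for a weight function `ν` on the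
configurations of a finite set. -/
noncomputable def condOne {I : Type*} [DecidableEq I] [Fintype I]
    (ν : (I → Bool) → ℝ) (s : I) (ξ : I → Bool) : ℝ :=
  ν (Function.update ξ s true) /
    (ν (Function.update ξ s true) + ν (Function.update ξ s false))

/-- `ν` is a probability weight assigning positive probability to every configuration. -/
def IsProbWeight {I : Type*} [DecidableEq I] [Fintype I] (ν : (I → Bool) → ℝ) : Prop :=
  (∀ σ, 0 < ν σ) ∧ ∑ σ : I → Bool, ν σ = 1

/-- `ν` is monotone: the conditional probability of a 1 at `s` is nondecreasing in the
configuration off `s`. -/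
def IsMonotoneWeight {I : Type*} [DecidableEq I] [Fintype I] (ν : (I → Bool) → ℝ) : Prop :=
  ∀ s : I, ∀ ξ ξ' : I → Bool, (∀ t, t ≠ s → ξ t ≤ ξ' t) →
    condOne ν s ξ ≤ condOne ν s ξ'

/-- Extension of a configuration on the finite set `F` by `0` outside `F`. -/
def extendCfg (F : Finset S) (τ : F → Bool) : S → Bool :=
  fun s => if h : s ∈ F then τ ⟨s, h⟩ else false

/-- The pushforward to `{0,1}^S` of a weight function on `{0,1}^F`, `F ⊆ S` finite, under
the map extending a configuration by `0` off `F`. -/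
noncomputable def pushCfg (F : Finset S) (ν : (F → Bool) → ℝ) : Measure (S → Bool) :=
  ∑ τ : F → Bool, ENNReal.ofReal (ν τ) • Measure.dirac (extendCfg F τ)

/-!
Both noisy measures are images under product Markov kernels: `μ^{(-,ε)}` switches each `1` to `0`
with probability `ε`, `μ^{(+,ε)}` each `0` to `1`. In finite volume, fix a site `s` and a
configuration `ζ` off `s`. The thinned weight of `ζ`, conditioned on the value at `s`, is an
average over configurations `x ≥ ζ`, and at each of them `ν₂` has conditional probability of a `1`
at least `p + ε`, where `p` is that of `ν₁` at any `ξ ≤ ζ` (monotonicity of `ν₁` and the gap).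
After thinning at `s` at least `(1 - ε)(p + ε) ≥ p` remains. This is Holley's single-site
condition, so Holley's inequality gives `ν₁ ≼ ν₂^{(-,ε)}`; dually `ν₁^{(+,ε)} ≼ ν₂` by the
monotonicity of `ν₂`. Domination survives weak limits, and the noisy finite-volume measures
converge weakly to the noisy limits: their cylinder probabilities are `(1 - ε)^{|F|}` times those
of `ν_{i,n}`, and on the compact space `{0,1}^S` continuous functions are uniform limits of
linear combinations of cylinder indicators.
-/

def cylSet {ι : Type*} (v : Bool) (F : Finset ι) : Set (ι → Bool) := {η | ∀ s ∈ F, η s = v}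

section ConditionalProbability

open Function

variable {I : Type*} [Fintype I] [DecidableEq I]

lemma condOne_nonneg {ν : (I → Bool) → ℝ} (hν : ∀ x, 0 < ν x) (s : I) (ξ : I → Bool) :
    0 ≤ condOne ν s ξ :=
  div_nonneg (hν _).le (add_pos (hν _) (hν _)).le

lemma condOne_le_one {ν : (I → Bool) → ℝ} (hν : ∀ x, 0 < ν x) (s : I) (ξ : I → Bool) :
    condOne ν s ξ ≤ 1 :=
  (div_le_one (add_pos (hν _) (hν _))).2 (le_add_of_nonneg_right (hν _).le)

lemma le_condOne_iff {ν : (I → Bool) → ℝ} (hν : ∀ x, 0 < ν x) {s : I} {ξ : I → Bool} {q : ℝ} :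
    q ≤ condOne ν s ξ ↔ q * (ν (update ξ s true) + ν (update ξ s false)) ≤ ν (update ξ s true) :=
  le_div_iff₀ (add_pos (hν _) (hν _))

lemma condOne_le_iff {ν : (I → Bool) → ℝ} (hν : ∀ x, 0 < ν x) {s : I} {ξ : I → Bool} {q : ℝ} :
    condOne ν s ξ ≤ q ↔ ν (update ξ s true) ≤ q * (ν (update ξ s true) + ν (update ξ s false)) :=
  div_le_iff₀ (add_pos (hν _) (hν _))

lemma condOne_le_condOne_iff {f g : (I → Bool) → ℝ} (hf : ∀ x, 0 < f x) (hg : ∀ x, 0 < g x)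
    {s : I} {ξ ζ : I → Bool} :
    condOne f s ξ ≤ condOne g s ζ ↔
      f (update ξ s true) * g (update ζ s false) ≤ f (update ξ s false) * g (update ζ s true) := by
  rw [condOne, condOne, div_le_div_iff₀ (add_pos (hf _) (hf _)) (add_pos (hg _) (hg _))]
  constructor <;> intro h <;> linarith

/-- Holley's single-site criterion. -/
lemma mul_le_mul_inf_sup_of_condOne_le {f g : (I → Bool) → ℝ} (hf : ∀ x, 0 < f x)
    (hg : ∀ x, 0 < g x)
    (h : ∀ s ξ ζ, (∀ t, t ≠ s → ξ t ≤ ζ t) → condOne f s ξ ≤ condOne g s ζ) (a b : I → Bool) :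
    f a * g b ≤ f (a ⊓ b) * g (a ⊔ b) := by
  induction b using WellFoundedGT.induction with
  | _ b ih =>
  by_cases hab : a ≤ b
  · rw [inf_eq_left.2 hab, sup_eq_right.2 hab]
  obtain ⟨s, hs⟩ : ∃ s, ¬a s ≤ b s := by simpa [Pi.le_def] using hab
  have has : a s = true := by revert hs; cases a s <;> simp
  have hbs : b s = false := by revert hs; cases b s <;> simp
  set b' := update b s true
  have hbb' : b < b' := by
    refine lt_of_le_of_ne (fun t => ?_) fun he => ?_
    · rcases eq_or_ne t s with rfl | ht
      · simp [b', hbs]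
      · simp [b', update_of_ne ht]
    · simpa [b', hbs] using congrFun he s
  have hinf : a ⊓ b' = update (a ⊓ b) s true := by
    ext t; rcases eq_or_ne t s with rfl | ht <;> simp [b', *]
  have hsup : a ⊔ b' = a ⊔ b := by
    ext t; rcases eq_or_ne t s with rfl | ht <;> simp [b', *]
  -- the single-site condition at `s` moves `b` up to `b'`, where the induction hypothesis applies
  have hstep := (condOne_le_condOne_iff hf hg).1 (h s (a ⊓ b) b fun t _ => inf_le_right)
  have hinf₀ : update (a ⊓ b) s false = a ⊓ b := update_eq_self_iff.2 (by simp [hbs])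
  have hb₀ : update b s false = b := update_eq_self_iff.2 hbs.symm
  rw [hinf₀, hb₀] at hstep
  have hind := ih b' hbb'
  rw [hinf, hsup] at hind
  have hpos : 0 < f (update (a ⊓ b) s true) * g b' := mul_pos (hf _) (hg _)
  nlinarith [mul_le_mul hstep hind (mul_pos (hf a) (hg b')).le (mul_pos (hf _) (hg _)).le]

lemma sum_mul_le_sum_mul_of_condOne_le {f g : (I → Bool) → ℝ} (hf : ∀ x, 0 < f x)
    (hg : ∀ x, 0 < g x) (hfg : ∑ x, f x = ∑ x, g x)
    (h : ∀ s ξ ζ, (∀ t, t ≠ s → ξ t ≤ ζ t) → condOne f s ξ ≤ condOne g s ζ)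
    {φ : (I → Bool) → ℝ} (hφ : Monotone φ) :
    ∑ x, φ x * f x ≤ ∑ x, φ x * g x := by
  have key := holley f g (fun x => φ x - φ ⊥) (fun x => sub_nonneg.2 (hφ bot_le))
    (fun x => (hf x).le) (fun x => (hg x).le) (fun x y hxy => sub_le_sub_right (hφ hxy) _) hfg
    (mul_le_mul_inf_sup_of_condOne_le hf hg h)
  simp only [sub_mul, Finset.sum_sub_distrib, ← Finset.mul_sum, hfg] at key
  linarith

end ConditionalProbability

section Noise

open Finset Function

variable {I : Type*} [Fintype I] [DecidableEq I]

/-- The one-site transition probability from `c` to `b` of the noise that switches `!v` to `v`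
with probability `ε`: `v = false` gives `μ^{(-,ε)}`, `v = true` gives `μ^{(+,ε)}`. -/
def noiseKernel (v : Bool) (ε : ℝ) (c b : Bool) : ℝ :=
  if c = v then (if b = v then 1 else 0) else (if b = v then ε else 1 - ε)

lemma noiseKernel_true_add_false (v : Bool) (ε : ℝ) (c : Bool) :
    noiseKernel v ε c true + noiseKernel v ε c false = 1 := by
  unfold noiseKernel; cases v <;> cases c <;> simp

lemma noiseKernel_nonneg (v : Bool) {ε : ℝ} (h0 : 0 ≤ ε) (h1 : ε ≤ 1) (c b : Bool) :
    0 ≤ noiseKernel v ε c b := by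
  unfold noiseKernel; split_ifs <;> linarith

lemma noiseKernel_self_pos (v : Bool) {ε : ℝ} (h1 : ε < 1) (c : Bool) :
    0 < noiseKernel v ε c c := by
  unfold noiseKernel; split_ifs <;> simp [h1]

lemma eq_of_noiseKernel_ne_zero {v : Bool} {ε : ℝ} {c b : Bool} (h : noiseKernel v ε c b ≠ 0)
    (hc : c = v) : b = v := by
  by_contra hb; simp [noiseKernel, hc, hb] at h

noncomputable def noisy (v : Bool) (ε : ℝ) (ν : (I → Bool) → ℝ) (σ : I → Bool) : ℝ :=
  ∑ x, ν x * ∏ t, noiseKernel v ε (x t) (σ t)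

lemma noisy_pos {ν : (I → Bool) → ℝ} (hν : ∀ x, 0 < ν x) (v : Bool) {ε : ℝ} (h0 : 0 ≤ ε)
    (h1 : ε < 1) (σ : I → Bool) : 0 < noisy v ε ν σ :=
  sum_pos' (fun x _ => mul_nonneg (hν x).le
      (prod_nonneg fun _ _ => noiseKernel_nonneg v h0 h1.le _ _))
    ⟨σ, mem_univ σ, mul_pos (hν σ) (prod_pos fun _ _ => noiseKernel_self_pos v h1 _)⟩

lemma indicator_cylSet_eq_prod (u : Bool) (F : Finset I) (σ : I → Bool) :
    (cylSet u F).indicator (1 : (I → Bool) → ℝ) σ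
      = ∏ t, if t ∈ F then (if σ t = u then 1 else 0) else 1 := by
  rw [Fintype.prod_ite_mem, prod_ite_zero, prod_const_one]
  by_cases h : σ ∈ cylSet u F
  · simp only [Set.indicator_of_mem h, Pi.one_apply]
    exact (if_pos h).symm
  · simp only [Set.indicator_of_notMem h]
    exact (if_neg h).symm

lemma sum_prod_noiseKernel_mul_indicator_cylSet (v : Bool) (ε : ℝ) (F : Finset I)
    (x : I → Bool) :
    ∑ σ, (∏ t, noiseKernel v ε (x t) (σ t)) * (cylSet (!v) F).indicator 1 σ
      = (1 - ε) ^ #F * (cylSet (!v) F).indicator (1 : (I → Bool) → ℝ) x := by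
  have hsite : ∀ t, ∑ b, noiseKernel v ε (x t) b * (if t ∈ F then (if b = !v then 1 else 0) else 1)
      = if t ∈ F then (if x t = !v then 1 - ε else 0) else 1 := by
    intro t
    split_ifs
    · simp_all [noiseKernel]
    · simp_all [noiseKernel]
    · simp [noiseKernel_true_add_false]
  simp_rw [indicator_cylSet_eq_prod, ← prod_mul_distrib]
  calc _ = ∏ t, ∑ b, noiseKernel v ε (x t) b * (if t ∈ F then (if b = !v then 1 else 0) else 1) :=
        (Fintype.prod_sum _).symm
    _ = _ := by
      rw [Fintype.prod_congr _ _ hsite, Fintype.prod_ite_mem, prod_ite_zero, prod_const,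
        Fintype.prod_ite_mem, prod_ite_zero, prod_const_one, mul_ite, mul_one, mul_zero]

lemma sum_noisy_mul_indicator_cylSet (v : Bool) (ε : ℝ) (ν : (I → Bool) → ℝ) (F : Finset I) :
    ∑ σ, noisy v ε ν σ * (cylSet (!v) F).indicator 1 σ
      = (1 - ε) ^ #F * ∑ x, ν x * (cylSet (!v) F).indicator 1 x := by
  simp_rw [noisy, sum_mul, mul_assoc]
  rw [sum_comm, mul_sum]
  refine sum_congr rfl fun x _ => ?_
  rw [← mul_sum, sum_prod_noiseKernel_mul_indicator_cylSet]
  ring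

lemma sum_noisy (v : Bool) (ε : ℝ) (ν : (I → Bool) → ℝ) : ∑ σ, noisy v ε ν σ = ∑ x, ν x := by
  simpa [cylSet] using sum_noisy_mul_indicator_cylSet v ε ν ∅

noncomputable def offSiteNoise (v : Bool) (ε : ℝ) (s : I) (ζ x : I → Bool) : ℝ :=
  ∏ t ∈ univ.erase s, noiseKernel v ε (x t) (ζ t)

lemma offSiteNoise_nonneg (v : Bool) {ε : ℝ} (h0 : 0 ≤ ε) (h1 : ε ≤ 1) (s : I)
    (ζ x : I → Bool) : 0 ≤ offSiteNoise v ε s ζ x :=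
  prod_nonneg fun _ _ => noiseKernel_nonneg v h0 h1 _ _

lemma offSiteNoise_self_pos (v : Bool) {ε : ℝ} (h1 : ε < 1) (s : I) (ζ : I → Bool) :
    0 < offSiteNoise v ε s ζ ζ :=
  prod_pos fun _ _ => noiseKernel_self_pos v h1 _

lemma offSiteNoise_update (v : Bool) (ε : ℝ) (s : I) (ζ x : I → Bool) (c : Bool) :
    offSiteNoise v ε s ζ (update x s c) = offSiteNoise v ε s ζ x :=
  prod_congr rfl fun t ht => by rw [update_of_ne (ne_of_mem_erase ht)]

lemma eq_of_offSiteNoise_ne_zero {v : Bool} {ε : ℝ} {s : I} {ζ x : I → Bool}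
    (h : offSiteNoise v ε s ζ x ≠ 0) {t : I} (ht : t ≠ s) (hx : x t = v) : ζ t = v :=
  eq_of_noiseKernel_ne_zero (prod_ne_zero_iff.1 h t (mem_erase.2 ⟨ht, mem_univ t⟩)) hx

lemma noisy_update (v : Bool) (ε : ℝ) (ν : (I → Bool) → ℝ) (s : I) (ζ : I → Bool) (b : Bool) :
    noisy v ε ν (update ζ s b) = ∑ x, ν x * noiseKernel v ε (x s) b * offSiteNoise v ε s ζ x := by
  refine sum_congr rfl fun x _ => ?_
  rw [← mul_prod_erase _ _ (mem_univ s), update_self, offSiteNoise, mul_assoc]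
  congr 2
  exact prod_congr rfl fun t ht => by rw [update_of_ne (ne_of_mem_erase ht)]

lemma sum_update_true_add_update_false (G : (I → Bool) → ℝ) (s : I) :
    ∑ x, (G (update x s true) + G (update x s false)) = 2 * ∑ x, G x := by
  let flipAt : Equiv.Perm (I → Bool) :=
    Involutive.toPerm (fun x => update x s (!x s)) fun x => by simp
  have hpair : ∀ x, G (update x s true) + G (update x s false) = G x + G (flipAt x) := by
    intro x
    have hself := update_eq_self s x
    change _ = G x + G (update x s (!x s))
    cases hx : x s <;> rw [hx] at hself <;>
      simp only [hself, Bool.not_false, Bool.not_true, add_comm]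
  rw [sum_congr rfl fun x _ => hpair x, sum_add_distrib, Equiv.sum_comp flipAt G, two_mul]

lemma two_mul_noisy_update (v : Bool) (ε : ℝ) (ν : (I → Bool) → ℝ) (s : I) (ζ : I → Bool)
    (b : Bool) :
    2 * noisy v ε ν (update ζ s b) = ∑ x, offSiteNoise v ε s ζ x *
      (ν (update x s true) * noiseKernel v ε true b
        + ν (update x s false) * noiseKernel v ε false b) := by
  rw [noisy_update, ← sum_update_true_add_update_false _ s]
  refine sum_congr rfl fun x _ => ?_
  simp only [offSiteNoise_update, update_self]
  ring

lemma condOne_noisy (v : Bool) (ε : ℝ) (ν : (I → Bool) → ℝ) (s : I) (ζ : I → Bool) :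
    condOne (noisy v ε ν) s ζ
      = (∑ x, offSiteNoise v ε s ζ x * (ν (update x s true) * noiseKernel v ε true true
          + ν (update x s false) * noiseKernel v ε false true))
        / ∑ x, offSiteNoise v ε s ζ x * (ν (update x s true) + ν (update x s false)) := by
  have htotal : 2 * noisy v ε ν (update ζ s true) + 2 * noisy v ε ν (update ζ s false)
      = ∑ x, offSiteNoise v ε s ζ x * (ν (update x s true) + ν (update x s false)) := by
    rw [two_mul_noisy_update, two_mul_noisy_update, ← sum_add_distrib]
    refine sum_congr rfl fun x _ => ?_
    linear_combination offSiteNoise v ε s ζ x *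
      (ν (update x s true) * noiseKernel_true_add_false v ε true
        + ν (update x s false) * noiseKernel_true_add_false v ε false)
  rw [← htotal, ← two_mul_noisy_update, ← mul_add, mul_div_mul_left _ _ two_ne_zero, condOne]

section SingleSite

variable {v : Bool} {ε : ℝ} {ν : (I → Bool) → ℝ} {s : I} {ζ : I → Bool} {q : ℝ}

lemma sum_offSiteNoise_mul_pos (hν : ∀ x, 0 < ν x) (h0 : 0 ≤ ε) (h1 : ε < 1) :
    0 < ∑ x, offSiteNoise v ε s ζ x * (ν (update x s true) + ν (update x s false)) :=
  sum_pos' (fun x _ => mul_nonneg (offSiteNoise_nonneg v h0 h1.le s ζ x)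
      (add_pos (hν _) (hν _)).le)
    ⟨ζ, mem_univ ζ, mul_pos (offSiteNoise_self_pos v h1 s ζ) (add_pos (hν _) (hν _))⟩

lemma le_condOne_noisy (hν : ∀ x, 0 < ν x) (h0 : 0 ≤ ε) (h1 : ε < 1)
    (h : ∀ x, offSiteNoise v ε s ζ x ≠ 0 →
      q * (ν (update x s true) + ν (update x s false))
        ≤ ν (update x s true) * noiseKernel v ε true true
          + ν (update x s false) * noiseKernel v ε false true) :
    q ≤ condOne (noisy v ε ν) s ζ := by
  rw [condOne_noisy, le_div_iff₀ (sum_offSiteNoise_mul_pos hν h0 h1), mul_sum]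
  refine sum_le_sum fun x _ => ?_
  rcases eq_or_ne (offSiteNoise v ε s ζ x) 0 with hx | hx
  · simp [hx]
  · rw [mul_left_comm]
    exact mul_le_mul_of_nonneg_left (h x hx) (offSiteNoise_nonneg v h0 h1.le s ζ x)

lemma condOne_noisy_le (hν : ∀ x, 0 < ν x) (h0 : 0 ≤ ε) (h1 : ε < 1)
    (h : ∀ x, offSiteNoise v ε s ζ x ≠ 0 →
      ν (update x s true) * noiseKernel v ε true true
          + ν (update x s false) * noiseKernel v ε false true
        ≤ q * (ν (update x s true) + ν (update x s false))) :
    condOne (noisy v ε ν) s ζ ≤ q := by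
  rw [condOne_noisy, div_le_iff₀ (sum_offSiteNoise_mul_pos hν h0 h1), mul_sum]
  refine sum_le_sum fun x _ => ?_
  rcases eq_or_ne (offSiteNoise v ε s ζ x) 0 with hx | hx
  · simp [hx]
  · rw [mul_left_comm]
    exact mul_le_mul_of_nonneg_left (h x hx) (offSiteNoise_nonneg v h0 h1.le s ζ x)

end SingleSite

variable {ν₁ ν₂ : (I → Bool) → ℝ} {ε : ℝ}

lemma condOne_le_condOne_noisy_false (h₂ : ∀ x, 0 < ν₂ x) (hm₁ : IsMonotoneWeight ν₁)
    (h0 : 0 ≤ ε) (h1 : ε < 1) (hgap : ∀ s ξ, condOne ν₁ s ξ + ε ≤ condOne ν₂ s ξ) {s : I}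
    {ξ ζ : I → Bool} (hξζ : ∀ t, t ≠ s → ξ t ≤ ζ t) :
    condOne ν₁ s ξ ≤ condOne (noisy false ε ν₂) s ζ := by
  set p := condOne ν₁ s ξ
  have hp : p ≤ (1 - ε) * (p + ε) := by nlinarith [hgap s ξ, condOne_le_one h₂ s ξ]
  refine le_condOne_noisy h₂ h0 h1 fun x hx => ?_
  have hζx : ∀ t, t ≠ s → ζ t ≤ x t := fun t ht => by
    have := eq_of_offSiteNoise_ne_zero hx ht
    cases hxt : x t <;> simp_all
  have hpx : p + ε ≤ condOne ν₂ s x := by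
    linarith [hm₁ s ξ x fun t ht => (hξζ t ht).trans (hζx t ht), hgap s x]
  have := (le_condOne_iff h₂).1 hpx
  simp only [noiseKernel, if_pos, Bool.true_eq_false, if_false, mul_zero, add_zero]
  nlinarith [h₂ (update x s true), h₂ (update x s false)]

lemma condOne_noisy_true_le_condOne (h₁ : ∀ x, 0 < ν₁ x) (hm₂ : IsMonotoneWeight ν₂)
    (h0 : 0 ≤ ε) (h1 : ε < 1) (hgap : ∀ s ξ, condOne ν₁ s ξ + ε ≤ condOne ν₂ s ξ) {s : I}
    {ξ ζ : I → Bool} (hξζ : ∀ t, t ≠ s → ξ t ≤ ζ t) :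
    condOne (noisy true ε ν₁) s ξ ≤ condOne ν₂ s ζ := by
  set q := condOne ν₂ s ζ
  have hq : ε ≤ q := by linarith [hgap s ζ, condOne_nonneg h₁ s ζ]
  refine condOne_noisy_le h₁ h0 h1 fun x hx => ?_
  have hxξ : ∀ t, t ≠ s → x t ≤ ξ t := fun t ht => by
    have := eq_of_offSiteNoise_ne_zero hx ht
    cases hxt : x t <;> simp_all
  have hqx : condOne ν₁ s x + ε ≤ q :=
    (hgap s x).trans (hm₂ s x ζ fun t ht => (hxξ t ht).trans (hξζ t ht))
  have := (condOne_le_iff h₁).1 (le_sub_iff_add_le.2 hqx)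
  simp only [noiseKernel, if_pos, Bool.false_eq_true, if_false, mul_one]
  nlinarith [h₁ (update x s true), h₁ (update x s false)]

end Noise

section Cylinders

open Function

variable {ι : Type*}

lemma cylSet_insert [DecidableEq ι] (v : Bool) (s : ι) (F : Finset ι) :
    cylSet v (insert s F) = cylSet v {s} ∩ cylSet v F := by
  ext η; simp [cylSet]

lemma isClopen_cylSet (v : Bool) (F : Finset ι) : IsClopen (cylSet v F) := by
  have : cylSet v F = (F : Set ι).pi fun _ => {v} := by ext η; simp [cylSet]
  rw [this]
  exact ⟨isClosed_set_pi fun _ _ => isClosed_discrete _,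
    isOpen_set_pi F.finite_toSet fun _ _ => isOpen_discrete _⟩

lemma measurableSet_cylSet (v : Bool) (F : Finset ι) : MeasurableSet (cylSet v F) := by
  have : cylSet v F = ⋂ s ∈ F, (fun η : ι → Bool => η s) ⁻¹' {v} := by ext η; simp [cylSet]
  rw [this]
  exact F.measurableSet_biInter fun s _ => measurable_pi_apply s (measurableSet_singleton v)

variable (ι) in
def cylSpan (v : Bool) : Submodule ℝ ((ι → Bool) → ℝ) :=
  Submodule.span ℝ (Set.range fun F : Finset ι => (cylSet v F).indicator 1)

lemma indicator_cylSet_mul_mem_cylSpan [DecidableEq ι] (v : Bool) (s : ι)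
    {φ : (ι → Bool) → ℝ} (hφ : φ ∈ cylSpan ι v) :
    (cylSet v {s}).indicator 1 * φ ∈ cylSpan ι v := by
  suffices cylSpan ι v ≤ (cylSpan ι v).comap (LinearMap.mulLeft ℝ ((cylSet v {s}).indicator 1))
    from this hφ
  refine Submodule.span_le.2 ?_
  rintro _ ⟨F, rfl⟩
  exact Submodule.subset_span ⟨insert s F, by simp [cylSet_insert, Set.inter_indicator_one]⟩

lemma mem_cylSpan_of_dependsOn (v : Bool) {G : Finset ι} {φ : (ι → Bool) → ℝ}
    (hφ : DependsOn φ G) : φ ∈ cylSpan ι v := by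
  classical
  induction G using Finset.induction_on generalizing φ with
  | empty =>
    have : φ = φ (fun _ => v) • (cylSet v ∅).indicator 1 := by
      ext η; simpa [cylSet] using hφ (x := η) (y := fun _ => v) (by simp)
    rw [this]
    exact Submodule.smul_mem _ _ (Submodule.subset_span ⟨∅, rfl⟩)
  | insert s G hs ih =>
    have hdep : ∀ b, DependsOn (fun η => φ (update η s b)) G := fun b η η' h =>
      hφ fun t ht => by
        rcases eq_or_ne t s with rfl | hts
        · simp
        · simp [update_of_ne hts, h t (by simpa [hts] using ht)]
    have hsplit : φ = (fun η => φ (update η s (!v))) + (cylSet v {s}).indicator 1 *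
        ((fun η => φ (update η s v)) - fun η => φ (update η s (!v))) := by
      ext η
      have hself := update_eq_self s η
      by_cases hη : η s = v
      · rw [hη] at hself
        simp [cylSet, hη, hself]
      · have hη' : η s = !v := by cases v <;> simpa using hη
        rw [hη'] at hself
        simp [cylSet, hη, hself]
    rw [hsplit]
    exact add_mem (ih (hdep _))
      (indicator_cylSet_mul_mem_cylSpan v s (sub_mem (ih (hdep _)) (ih (hdep _))))

lemma Continuous.exists_finset_abs_sub_le {X : ι → Type*} [∀ i, TopologicalSpace (X i)]
    [∀ i, DiscreteTopology (X i)] [CompactSpace (∀ i, X i)] {f : (∀ i, X i) → ℝ}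
    (hf : Continuous f) {δ : ℝ} (hδ : 0 < δ) :
    ∃ G : Finset ι, ∀ x y : ∀ i, X i, (∀ i ∈ G, x i = y i) → |f x - f y| ≤ δ := by
  classical
  have hloc : ∀ x, ∃ G : Finset ι,
      ((G : Set ι).pi fun i => {x i}) ⊆ {y | |f y - f x| < δ / 2} := by
    intro x
    have hx : {y | |f y - f x| < δ / 2} ∈ 𝓝 x :=
      (isOpen_lt (hf.sub continuous_const).abs continuous_const).mem_nhds (by simpa using hδ)
    rw [nhds_pi, Filter.mem_pi'] at hx
    obtain ⟨G, t, ht, hsub⟩ := hx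
    refine ⟨G, fun y hy => hsub fun i hi => ?_⟩
    rw [Set.mem_singleton_iff.1 (hy i hi)]
    exact mem_of_mem_nhds (ht i)
  choose G hG using hloc
  obtain ⟨T, -, hT⟩ := isCompact_univ.elim_nhds_subcover
    (fun x => (G x : Set ι).pi fun i => {x i})
    fun x _ => set_pi_mem_nhds (G x).finite_toSet fun i _ => by simp
  refine ⟨T.biUnion G, fun x y hxy => ?_⟩
  obtain ⟨x₀, hx₀T, hx₀⟩ := Set.mem_iUnion₂.1 (hT (Set.mem_univ x))
  have hy₀ : y ∈ (G x₀ : Set ι).pi fun i => {x₀ i} := fun i hi => by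
    rw [← hxy i (Finset.mem_biUnion.2 ⟨x₀, hx₀T, hi⟩)]
    exact hx₀ i hi
  have h₁ : |f x - f x₀| < δ / 2 := hG x₀ hx₀
  have h₂ : |f y - f x₀| < δ / 2 := hG x₀ hy₀
  linarith [abs_sub_le (f x) (f x₀) (f y), abs_sub_comm (f x₀) (f y)]

end Cylinders

section WeakConvergence

variable {ι : Type*}

lemma integrable_of_mem_cylSpan [Countable ι] {μ : Measure (ι → Bool)} [IsFiniteMeasure μ]
    {v : Bool} {φ : (ι → Bool) → ℝ} (hφ : φ ∈ cylSpan ι v) : Integrable φ μ := by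
  induction hφ using Submodule.span_induction with
  | mem _ h =>
    obtain ⟨F, rfl⟩ := h
    exact (integrable_const 1).indicator (measurableSet_cylSet v F)
  | zero => exact integrable_zero _ _ _
  | add _ _ _ _ h₁ h₂ => exact h₁.add h₂
  | smul c _ _ h => exact h.smul c

lemma tendsto_integral_of_mem_cylSpan [Countable ι] {ρn : ℕ → Measure (ι → Bool)}
    {ρ : Measure (ι → Bool)} [∀ n, IsFiniteMeasure (ρn n)] [IsFiniteMeasure ρ] {v : Bool}
    (h : ∀ F, Tendsto (fun n => (ρn n).real (cylSet v F)) atTop (𝓝 (ρ.real (cylSet v F))))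
    {φ : (ι → Bool) → ℝ} (hφ : φ ∈ cylSpan ι v) :
    Tendsto (fun n => ∫ η, φ η ∂ρn n) atTop (𝓝 (∫ η, φ η ∂ρ)) := by
  induction hφ using Submodule.span_induction with
  | mem _ hF =>
    obtain ⟨F, rfl⟩ := hF
    simpa only [integral_indicator_one (measurableSet_cylSet v F)] using h F
  | zero => simp
  | add φ ψ hφ hψ h₁ h₂ =>
    simp_rw [Pi.add_apply, integral_add (integrable_of_mem_cylSpan hφ)
      (integrable_of_mem_cylSpan hψ)]
    exact h₁.add h₂
  | smul c _ _ hc =>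
    simp_rw [Pi.smul_apply, integral_smul]
    exact hc.const_smul c

lemma abs_integral_sub_integral_le {X : Type*} [MeasurableSpace X] {μ : Measure X}
    [IsProbabilityMeasure μ] {f g : X → ℝ} (hf : Integrable f μ) (hg : Integrable g μ) {δ : ℝ}
    (h : ∀ x, |f x - g x| ≤ δ) : |∫ x, f x ∂μ - ∫ x, g x ∂μ| ≤ δ := by
  rw [← integral_sub hf hg]
  simpa using norm_integral_le_of_norm_le_const (μ := μ) (f := fun x => f x - g x)
    (Eventually.of_forall h)

lemma weakConv_of_tendsto_cylSet [Countable ι] {ρn : ℕ → Measure (ι → Bool)}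
    {ρ : Measure (ι → Bool)} [∀ n, IsProbabilityMeasure (ρn n)] [IsProbabilityMeasure ρ]
    (v : Bool)
    (h : ∀ F, Tendsto (fun n => (ρn n).real (cylSet v F)) atTop (𝓝 (ρ.real (cylSet v F)))) :
    WeakConv ρn ρ := by
  classical
  intro f hf ⟨C, hC⟩
  have hfi : ∀ μ : Measure (ι → Bool), [IsFiniteMeasure μ] → Integrable f μ := fun μ _ =>
    Integrable.of_bound hf.measurable.aestronglyMeasurable C (Eventually.of_forall hC)
  rw [Metric.tendsto_atTop]
  intro δ hδ
  obtain ⟨G, hG⟩ := hf.exists_finset_abs_sub_le (show 0 < δ / 4 by positivity)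
  set g : (ι → Bool) → ℝ := fun η => f fun s => if s ∈ G then η s else false
  have hfg : ∀ η, |f η - g η| ≤ δ / 4 := fun η => hG _ _ fun s hs => by simp [hs]
  have hg : g ∈ cylSpan ι v :=
    mem_cylSpan_of_dependsOn v fun η η' h => congrArg f (funext fun s => by
      split_ifs with hs
      · exact h s hs
      · rfl)
  obtain ⟨N, hN⟩ := Metric.tendsto_atTop.1 (tendsto_integral_of_mem_cylSpan h hg) (δ / 4)
    (by positivity)
  refine ⟨N, fun n hn => ?_⟩
  have h₁ := abs_integral_sub_integral_le (hfi _) (integrable_of_mem_cylSpan hg) (μ := ρn n) hfg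
  have h₂ := abs_integral_sub_integral_le (hfi _) (integrable_of_mem_cylSpan hg) (μ := ρ) hfg
  have h₃ := hN n hn
  rw [Real.dist_eq] at h₃ ⊢
  linarith [abs_sub_le (∫ η, f η ∂ρn n) (∫ η, g η ∂ρn n) (∫ η, f η ∂ρ),
    abs_sub_le (∫ η, g η ∂ρn n) (∫ η, g η ∂ρ) (∫ η, f η ∂ρ),
    abs_sub_comm (∫ η, g η ∂ρ) (∫ η, f η ∂ρ)]

lemma tendsto_real_cylSet_of_weakConv {μn : ℕ → Measure (ι → Bool)} {μ : Measure (ι → Bool)}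
    (h : WeakConv μn μ) (v : Bool) (F : Finset ι) :
    Tendsto (fun n => (μn n).real (cylSet v F)) atTop (𝓝 (μ.real (cylSet v F))) := by
  have hF := h ((cylSet v F).indicator 1)
    ((isClopen_cylSet v F).continuous_indicator continuous_const)
    ⟨1, fun η => by by_cases hη : η ∈ cylSet v F <;> simp [hη]⟩
  simpa only [integral_indicator_one (measurableSet_cylSet v F)] using hF

lemma stochDom_of_weakConv {μn ρn : ℕ → Measure (ι → Bool)} {μ ρ : Measure (ι → Bool)}
    (h : ∀ n, StochDom (μn n) (ρn n)) (hμ : WeakConv μn μ) (hρ : WeakConv ρn ρ) :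
    StochDom μ ρ := fun f hf hb hm =>
  le_of_tendsto_of_tendsto' (hμ f hf hb) (hρ f hf hb) fun n => h n f hf hb hm

end WeakConvergence

section PushCfg

lemma extendCfg_mono {ι : Type*} [DecidableEq ι] (F : Finset ι) : Monotone (extendCfg F) :=
  fun τ τ' h s => by
    unfold extendCfg
    split
    · exact h _
    · exact le_rfl

lemma extendCfg_mem_cylSet_iff {ι : Type*} [DecidableEq ι] {F G : Finset ι} (hGF : G ⊆ F)
    (v : Bool) (τ : F → Bool) :
    extendCfg F τ ∈ cylSet v G ↔ τ ∈ cylSet v (G.subtype (· ∈ F)) := by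
  refine ⟨fun h t ht => ?_, fun h s hs => ?_⟩
  · simpa [extendCfg, t.2] using h t (Finset.mem_subtype.1 ht)
  · simpa [extendCfg, hGF hs] using h ⟨s, hGF hs⟩ (Finset.mem_subtype.2 hs)

lemma isProbabilityMeasure_pushCfg {ι : Type*} [DecidableEq ι] (F : Finset ι)
    {w : (F → Bool) → ℝ} (hw : IsProbWeight w) : IsProbabilityMeasure (pushCfg F w) := by
  constructor
  simp only [pushCfg, Measure.coe_finsetSum, Measure.coe_smul, Finset.sum_apply, Pi.smul_apply,
    measure_univ, smul_eq_mul, mul_one]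
  rw [← ENNReal.ofReal_sum_of_nonneg fun τ _ => (hw.1 τ).le, hw.2, ENNReal.ofReal_one]

lemma integral_pushCfg (F : Finset S) {w : (F → Bool) → ℝ} (hw : ∀ τ, 0 ≤ w τ)
    (φ : (S → Bool) → ℝ) : ∫ η, φ η ∂pushCfg F w = ∑ τ, w τ * φ (extendCfg F τ) := by
  rw [pushCfg, integral_finsetSum_measure fun τ _ =>
    (integrable_dirac enorm_lt_top).smul_measure ENNReal.ofReal_ne_top]
  refine Finset.sum_congr rfl fun τ _ => ?_
  rw [integral_smul_measure, integral_dirac, ENNReal.toReal_ofReal (hw τ), smul_eq_mul]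

lemma pushCfg_real_cylSet {F G : Finset S} (hGF : G ⊆ F) {w : (F → Bool) → ℝ}
    (hw : ∀ τ, 0 ≤ w τ) (v : Bool) :
    (pushCfg F w).real (cylSet v G) = ∑ τ, w τ * (cylSet v (G.subtype (· ∈ F))).indicator 1 τ := by
  rw [← integral_indicator_one (measurableSet_cylSet v G), integral_pushCfg F hw]
  refine Finset.sum_congr rfl fun τ _ => ?_
  by_cases h : τ ∈ cylSet v (G.subtype (· ∈ F))
  · rw [Set.indicator_of_mem h, Set.indicator_of_mem ((extendCfg_mem_cylSet_iff hGF v τ).2 h)]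
    rfl
  · rw [Set.indicator_of_notMem h,
      Set.indicator_of_notMem (mt (extendCfg_mem_cylSet_iff hGF v τ).1 h)]

lemma stochDom_pushCfg (F : Finset S) {f g : (F → Bool) → ℝ} (hf : ∀ τ, 0 < f τ)
    (hg : ∀ τ, 0 < g τ) (hfg : ∑ τ, f τ = ∑ τ, g τ)
    (h : ∀ s ξ ζ, (∀ t, t ≠ s → ξ t ≤ ζ t) → condOne f s ξ ≤ condOne g s ζ) :
    StochDom (pushCfg F f) (pushCfg F g) := fun φ _ _ hφ => by
  rw [integral_pushCfg F fun τ => (hf τ).le, integral_pushCfg F fun τ => (hg τ).le]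
  simp_rw [mul_comm (f _), mul_comm (g _)]
  exact sum_mul_le_sum_mul_of_condOne_le hf hg hfg h (hφ.comp (extendCfg_mono F))

end PushCfg

lemma eventually_subset_of_chain {ι : Type*} {Sn : ℕ → Finset ι}
    (hchain : ∀ n, Sn n ⊆ Sn (n + 1)) (hcover : ∀ s : ι, ∃ n, s ∈ Sn n) (F : Finset ι) :
    ∀ᶠ n in atTop, F ⊆ Sn n :=
  (eventually_all_finset F).2 fun s _ =>
    let ⟨m, hm⟩ := hcover s
    (eventually_ge_atTop m).mono fun _ hn => monotone_nat_of_le_succ hchain hn hm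

lemma weakConv_pushCfg_noisy {Sn : ℕ → Finset S} (hchain : ∀ n, Sn n ⊆ Sn (n + 1))
    (hcover : ∀ s : S, ∃ n, s ∈ Sn n) {ν : (n : ℕ) → (Sn n → Bool) → ℝ}
    (hν : ∀ n, IsProbWeight (ν n)) {μ ρ : Measure (S → Bool)} [IsProbabilityMeasure ρ]
    (hconv : WeakConv (fun n => pushCfg (Sn n) (ν n)) μ) (v : Bool) {ε : ℝ} (h0 : 0 ≤ ε)
    (h1 : ε < 1)
    (hρ : ∀ F : Finset S, ρ {η | ∀ s ∈ F, η s = !v}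
      = ENNReal.ofReal ((1 - ε) ^ F.card) * μ {η | ∀ s ∈ F, η s = !v}) :
    WeakConv (fun n => pushCfg (Sn n) (noisy v ε (ν n))) ρ := by
  have := fun n => isProbabilityMeasure_pushCfg (Sn n)
    ⟨noisy_pos (hν n).1 v h0 h1, (sum_noisy v ε (ν n)).trans (hν n).2⟩
  refine weakConv_of_tendsto_cylSet (!v) fun F => ?_
  have hρF : ρ.real (cylSet (!v) F) = (1 - ε) ^ F.card * μ.real (cylSet (!v) F) := by
    unfold cylSet
    rw [measureReal_def, hρ F, ENNReal.toReal_mul,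
      ENNReal.toReal_ofReal (pow_nonneg (by linarith) _), measureReal_def]
  rw [hρF]
  refine ((tendsto_real_cylSet_of_weakConv hconv (!v) F).const_mul _).congr' ?_
  filter_upwards [eventually_subset_of_chain hchain hcover F] with n hn
  rw [pushCfg_real_cylSet hn (fun τ => ((hν n).1 τ).le),
    pushCfg_real_cylSet hn (fun τ => (noisy_pos (hν n).1 v h0 h1 τ).le),
    sum_noisy_mul_indicator_cylSet, Finset.card_subtype, Finset.filter_true_of_mem hn]

lemma stochDom_pushCfg_noisy_false (F : Finset S) {ν₁ ν₂ : (F → Bool) → ℝ}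
    (h₁ : IsProbWeight ν₁) (h₂ : IsProbWeight ν₂) (hm₁ : IsMonotoneWeight ν₁) {ε : ℝ}
    (h0 : 0 ≤ ε) (h1 : ε < 1) (hgap : ∀ s ξ, condOne ν₁ s ξ + ε ≤ condOne ν₂ s ξ) :
    StochDom (pushCfg F ν₁) (pushCfg F (noisy false ε ν₂)) :=
  stochDom_pushCfg F h₁.1 (noisy_pos h₂.1 false h0 h1) (by rw [sum_noisy, h₁.2, h₂.2])
    fun _ _ _ hξζ => condOne_le_condOne_noisy_false h₂.1 hm₁ h0 h1 hgap hξζ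

lemma stochDom_pushCfg_noisy_true (F : Finset S) {ν₁ ν₂ : (F → Bool) → ℝ}
    (h₁ : IsProbWeight ν₁) (h₂ : IsProbWeight ν₂) (hm₂ : IsMonotoneWeight ν₂) {ε : ℝ}
    (h0 : 0 ≤ ε) (h1 : ε < 1) (hgap : ∀ s ξ, condOne ν₁ s ξ + ε ≤ condOne ν₂ s ξ) :
    StochDom (pushCfg F (noisy true ε ν₁)) (pushCfg F ν₂) :=
  stochDom_pushCfg F (noisy_pos h₁.1 true h0 h1) h₂.1 (by rw [sum_noisy, h₁.2, h₂.2])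
    fun _ _ _ hξζ => condOne_noisy_true_le_condOne h₁.1 hm₂ h0 h1 hgap hξζ

lemma iInf_sInf_le_of_mem {X : ℕ → Set ℝ} {b : ℝ} (hb : ∀ n, ∀ x ∈ X n, b ≤ x) {n : ℕ}
    {x : ℝ} (hx : x ∈ X n) : ⨅ m, sInf (X m) ≤ x := by
  refine (ciInf_le ⟨min b 0, ?_⟩ n).trans (csInf_le ⟨b, hb n⟩ hx)
  rintro _ ⟨m, rfl⟩
  exact Real.le_sInf (fun y hy => (min_le_left _ _).trans (hb m y hy)) (min_le_right _ _)

lemma condOne_add_iInf_le {ι : Type*} [DecidableEq ι] {Sn : ℕ → Finset ι}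
    {ν₁ ν₂ : (n : ℕ) → (Sn n → Bool) → ℝ}
    (hν₁ : ∀ n, IsProbWeight (ν₁ n)) (hν₂ : ∀ n, IsProbWeight (ν₂ n)) (n : ℕ) (s : Sn n)
    (ξ : Sn n → Bool) :
    condOne (ν₁ n) s ξ + ⨅ m : ℕ, sInf {x : ℝ | ∃ (s : Sn m) (ξ : Sn m → Bool),
      x = condOne (ν₂ m) s ξ - condOne (ν₁ m) s ξ} ≤ condOne (ν₂ n) s ξ := by
  rw [← le_sub_iff_add_le']
  refine iInf_sInf_le_of_mem (b := -1) ?_ ⟨s, ξ, rfl⟩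
  rintro m _ ⟨s', ξ', rfl⟩
  linarith [condOne_nonneg (hν₂ m).1 s' ξ', condOne_le_one (hν₁ m).1 s' ξ']

theorem prop_3_4_general (Sn : ℕ → Finset S) (hchain : ∀ n, Sn n ⊆ Sn (n + 1))
    (hcover : ∀ s : S, ∃ n, s ∈ Sn n)
    (ν₁ ν₂ : (n : ℕ) → (↥(Sn n) → Bool) → ℝ)
    (hν₁ : ∀ n, IsProbWeight (ν₁ n)) (hν₂ : ∀ n, IsProbWeight (ν₂ n))
    (hmono₁ : ∀ n, IsMonotoneWeight (ν₁ n)) (hmono₂ : ∀ n, IsMonotoneWeight (ν₂ n))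
    (μ₁ μ₂ : Measure (S → Bool))
    (hconv₁ : WeakConv (fun n => pushCfg (Sn n) (ν₁ n)) μ₁)
    (hconv₂ : WeakConv (fun n => pushCfg (Sn n) (ν₂ n)) μ₂)
    (hA : 0 < ⨅ n : ℕ, sInf {x : ℝ | ∃ (s : ↥(Sn n)) (ξ : ↥(Sn n) → Bool),
            x = condOne (ν₂ n) s ξ - condOne (ν₁ n) s ξ}) :
    ∃ ε : ℝ, 0 < ε ∧ ε ≤ 1 ∧
      (∀ ν : Measure (S → Bool), IsProbabilityMeasure ν → IsMinusEps μ₂ ν ε →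
        StochDom μ₁ ν) ∧
      (∀ ν' : Measure (S → Bool), IsProbabilityMeasure ν' → IsPlusEps μ₁ ν' ε →
        StochDom ν' μ₂) := by
  set A := ⨅ n : ℕ, sInf {x : ℝ | ∃ (s : ↥(Sn n)) (ξ : ↥(Sn n) → Bool),
    x = condOne (ν₂ n) s ξ - condOne (ν₁ n) s ξ}
  -- `ε < 1` keeps the noisy weights positive, as Holley's single-site criterion requires
  set ε := min (A / 2) (1 / 2)
  have hε0 : 0 < ε := lt_min (half_pos hA) one_half_pos
  have hε1 : ε < 1 := (min_le_right _ _).trans_lt one_half_lt_one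
  have hgap : ∀ n s ξ, condOne (ν₁ n) s ξ + ε ≤ condOne (ν₂ n) s ξ := fun n s ξ => by
    linarith [condOne_add_iInf_le hν₁ hν₂ n s ξ, min_le_left (A / 2) (1 / 2)]
  refine ⟨ε, hε0, hε1.le, fun ν _ hν => ?_, fun ν' _ hν' => ?_⟩
  · exact stochDom_of_weakConv (fun n => stochDom_pushCfg_noisy_false (Sn n) (hν₁ n) (hν₂ n)
      (hmono₁ n) hε0.le hε1 (hgap n)) hconv₁
      (weakConv_pushCfg_noisy hchain hcover hν₂ hconv₂ false hε0.le hε1 hν)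
  · exact stochDom_of_weakConv (fun n => stochDom_pushCfg_noisy_true (Sn n) (hν₁ n) (hν₂ n)
      (hmono₂ n) hε0.le hε1 (hgap n))
      (weakConv_pushCfg_noisy hchain hcover hν₁ hconv₁ true hε0.le hε1 hν') hconv₂

theorem prop_3_4 (Sn : ℕ → Finset S) (hchain : ∀ n, Sn n ⊆ Sn (n + 1))
    (hcover : ∀ s : S, ∃ n, s ∈ Sn n)
    (ν₁ ν₂ : (n : ℕ) → (↥(Sn n) → Bool) → ℝ)
    (hν₁ : ∀ n, IsProbWeight (ν₁ n)) (hν₂ : ∀ n, IsProbWeight (ν₂ n))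
    (hmono₁ : ∀ n, IsMonotoneWeight (ν₁ n)) (hmono₂ : ∀ n, IsMonotoneWeight (ν₂ n))
    (μ₁ μ₂ : Measure (S → Bool)) (hμ₁ : IsProbabilityMeasure μ₁)
    (hμ₂ : IsProbabilityMeasure μ₂)
    (hconv₁ : WeakConv (fun n => pushCfg (Sn n) (ν₁ n)) μ₁)
    (hconv₂ : WeakConv (fun n => pushCfg (Sn n) (ν₂ n)) μ₂)
    (hA : 0 < ⨅ n : ℕ, sInf {x : ℝ | ∃ (s : ↥(Sn n)) (ξ : ↥(Sn n) → Bool),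
            x = condOne (ν₂ n) s ξ - condOne (ν₁ n) s ξ}) :
    ∃ ε : ℝ, 0 < ε ∧ ε ≤ 1 ∧
      (∀ ν : Measure (S → Bool), IsProbabilityMeasure ν → IsMinusEps μ₂ ν ε →
        StochDom μ₁ ν) ∧
      (∀ ν' : Measure (S → Bool), IsProbabilityMeasure ν' → IsPlusEps μ₁ ν' ε →
        StochDom ν' μ₂) :=
  prop_3_4_general Sn hchain hcover ν₁ ν₂ hν₁ hν₂ hmono₁ hmono₂ μ₁ μ₂ hconv₁ hconv₂ hA
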